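/- arXiv:math/0401076 — 7 statements merged into one kernel-verified Lean document; each statement's English description precedes it below -/
import Mathlib

section
/- For every n ≥ 1 and every Borel set I ⊆ ℝ, the expected number of coordinates in I under the GUE eigenvalue measure μ_n equals the integral of the Hermite kernel on the diagonal: 𝔼_n[ #I ] = ∫_I K_n(x,x) dx. -/
open MeasureTheory ProbabilityTheory Filter Real

/-- Unnormalized-then-normalized GUE eigenvalue density on `ℝⁿ`. -/
noncomputable def gueDensity (n : ℕ) (Z : ℝ) (x : Fin n → ℝ) : ℝ :=
  Z⁻¹ * (∏ p ∈ Finset.univ.filter (fun p : Fin n × Fin n => p.1 < p.2), (x p.1 - x p.2) ^ 2)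
    * Real.exp (-(∑ i, (x i) ^ 2))

/-- The `k`-th smallest coordinate (k-th order statistic), `k ≥ 1`. -/
noncomputable def orderStat {n : ℕ} (k : ℕ) (x : Fin n → ℝ) : ℝ :=
  sInf {t : ℝ | k ≤ Nat.card {i : Fin n // x i ≤ t}}

/-- Number of coordinates lying in the set `I`. -/
noncomputable def countIn {n : ℕ} (I : Set ℝ) (x : Fin n → ℝ) : ℕ :=
  Nat.card {i : Fin n // x i ∈ I}

/-- Standard normal cumulative distribution function. -/
noncomputable def stdNormalCDF (ξ : ℝ) : ℝ :=
  ((gaussianReal 0 1) (Set.Iic ξ)).toReal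

/-- The semicircle distribution function `G`. -/
noncomputable def G (t : ℝ) : ℝ := (2 / Real.pi) * ∫ x in (-1:ℝ)..t, Real.sqrt (1 - x ^ 2)

/-- `c(n) ~ n^ρ` : `c(n) = h(n) n^ρ` with `h` subpolynomial in both directions. -/
def simGrowth (c : ℕ → ℝ) (ρ : ℝ) : Prop :=
  ∃ h : ℕ → ℝ, (∀ n, c n = h n * (n : ℝ) ^ ρ) ∧
    ∀ ε : ℝ, 0 < ε →
      Tendsto (fun n => h n / (n : ℝ) ^ ε) atTop (nhds 0) ∧
      Tendsto (fun n => h n * (n : ℝ) ^ ε) atTop atTop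

/-- The Hermite kernel built from orthonormalized Hermite polynomials `h`. -/
noncomputable def hermiteKernel (h : ℕ → Polynomial ℝ) (n : ℕ) (x y : ℝ) : ℝ :=
  ∑ j ∈ Finset.range n, (h j).eval x * (h j).eval y * Real.exp (-(x ^ 2 + y ^ 2) / 2)

namespace GUEAux

noncomputable def phi (h : ℕ → Polynomial ℝ) (j : ℕ) (t : ℝ) : ℝ :=
  (h j).eval t * Real.exp (-t ^ 2 / 2)

lemma phi_mul (h : ℕ → Polynomial ℝ) (i j : ℕ) (t : ℝ) :
    phi h i t * phi h j t = (h i).eval t * (h j).eval t * Real.exp (-t ^ 2) := by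
  unfold phi
  rw [show (h i).eval t * Real.exp (-t ^ 2 / 2) * ((h j).eval t * Real.exp (-t ^ 2 / 2))
      = (h i).eval t * (h j).eval t * (Real.exp (-t ^ 2 / 2) * Real.exp (-t ^ 2 / 2)) by ring,
    ← Real.exp_add]
  norm_num

lemma integrable_poly_gauss (P : Polynomial ℝ) :
    Integrable (fun t : ℝ => P.eval t * Real.exp (-t ^ 2)) := by
  have base : ∀ k : ℕ, Integrable (fun t : ℝ => t ^ k * Real.exp (-t ^ 2)) := by
    intro k
    have hg : Integrable (fun t : ℝ => t ^ (k : ℝ) * Real.exp (-(1 : ℝ) * t ^ 2)) :=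
      integrable_rpow_mul_exp_neg_mul_sq one_pos (neg_one_lt_zero.trans_le (Nat.cast_nonneg k))
    simpa [Real.rpow_natCast] using hg
  have : (fun t : ℝ => P.eval t * Real.exp (-t ^ 2))
      = fun t => ∑ k ∈ Finset.range (P.natDegree + 1), P.coeff k * (t ^ k * Real.exp (-t ^ 2)) := by
    funext t
    rw [Polynomial.eval_eq_sum_range, Finset.sum_mul]
    simp [mul_assoc]
  rw [this]
  exact integrable_finset_sum _ fun k _ => (base k).const_mul _

lemma integrable_phi_mul (h : ℕ → Polynomial ℝ) (i j : ℕ) :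
    Integrable (fun t : ℝ => phi h i t * phi h j t) := by
  simp_rw [phi_mul, ← Polynomial.eval_mul]
  exact integrable_poly_gauss _

lemma integral_phi_mul (h : ℕ → Polynomial ℝ)
    (horth : ∀ i j, (∫ x : ℝ, (h i).eval x * (h j).eval x * Real.exp (-x ^ 2)) =
      if i = j then 1 else 0) (i j : ℕ) :
    (∫ t : ℝ, phi h i t * phi h j t) = if i = j then 1 else 0 := by
  simp_rw [phi_mul]; exact horth i j

end GUEAux

namespace GUEAux2
open GUEAux

noncomputable def Dmat (h : ℕ → Polynomial ℝ) (n : ℕ) (x : Fin n → ℝ) :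
    Matrix (Fin n) (Fin n) ℝ :=
  Matrix.of fun i j => phi h (i : ℕ) (x j)

noncomputable def Dd (h : ℕ → Polynomial ℝ) (n : ℕ) (x : Fin n → ℝ) : ℝ := (Dmat h n x).det

lemma pairs_prod {n : ℕ} (f : Fin n → ℝ) :
    (∏ p ∈ Finset.univ.filter (fun p : Fin n × Fin n => p.1 < p.2), (f p.1 - f p.2) ^ 2)
      = ∏ i : Fin n, ∏ j ∈ Finset.Ioi i, (f j - f i) ^ 2 := by
  classical
  rw [Finset.prod_filter, Fintype.prod_prod_type]
  refine Finset.prod_congr rfl fun i _ => ?_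
  rw [← Finset.filter_lt_eq_Ioi, Finset.prod_filter]
  refine Finset.prod_congr rfl fun j _ => ?_
  by_cases hij : i < j <;> simp [hij, sub_sq, mul_comm]
  ring

lemma Dd_sq (h : ℕ → Polynomial ℝ) (hdeg : ∀ j, (h j).natDegree = j) (n : ℕ) (x : Fin n → ℝ) :
    Dd h n x ^ 2 = (∏ j : Fin n, (h j).leadingCoeff) ^ 2 *
      ((∏ p ∈ Finset.univ.filter (fun p : Fin n × Fin n => p.1 < p.2), (x p.1 - x p.2) ^ 2) *
        Real.exp (-(∑ i, (x i) ^ 2))) := by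
  classical
  have h1 : Dd h n x = (∏ j : Fin n, Real.exp (-(x j) ^ 2 / 2)) *
      (Matrix.of fun i j : Fin n => (h (i : ℕ)).eval (x j)).det := by
    have : Dmat h n x = Matrix.of fun i j : Fin n =>
        (fun j : Fin n => Real.exp (-(x j) ^ 2 / 2)) j *
          ((Matrix.of fun i j : Fin n => (h (i : ℕ)).eval (x j)) i j) := by
      ext i j
      simp [Dmat, phi, mul_comm]
    rw [Dd, this, Matrix.det_mul_row]
  have h2 : (Matrix.of fun i j : Fin n => (h (i : ℕ)).eval (x j)).det
      = (Matrix.of fun i j : Fin n => (h (j : ℕ)).eval (x i)).det := by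
    rw [← Matrix.det_transpose]
    rfl
  have h3 : (Matrix.of fun i j : Fin n => (h (j : ℕ)).eval (x i)).det
      = (Matrix.vandermonde x).det * (∏ j : Fin n, (h j).leadingCoeff) := by
    rw [Matrix.eval_matrixOfPolynomials_eq_vandermonde_mul_matrixOfPolynomials x
      (fun j => h (j : ℕ)) (fun i => le_of_eq (hdeg i)), Matrix.det_mul]
    congr 1
    rw [Matrix.det_of_upperTriangular]
    · refine Finset.prod_congr rfl fun i _ => ?_
      have hc := Polynomial.coeff_natDegree (p := h (i : ℕ))
      rw [hdeg] at hc
      rw [Matrix.of_apply, hc]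
    · intro i j hji
      rw [Matrix.of_apply]
      exact Polynomial.coeff_eq_zero_of_natDegree_lt (by rw [hdeg]; exact_mod_cast hji)
  rw [h1, h2, h3, Matrix.det_vandermonde, pairs_prod]
  have e1 : (∏ j : Fin n, Real.exp (-(x j) ^ 2 / 2)) ^ 2 = Real.exp (-(∑ i, (x i) ^ 2)) := by
    rw [← Real.exp_sum, ← Real.exp_nat_mul]
    congr 1
    push_cast
    rw [Finset.mul_sum, ← Finset.sum_neg_distrib]
    exact Finset.sum_congr rfl fun i _ => by ring
  have e2 : (∏ i : Fin n, ∏ j ∈ Finset.Ioi i, (x j - x i)) ^ 2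
      = ∏ i : Fin n, ∏ j ∈ Finset.Ioi i, (x j - x i) ^ 2 := by
    rw [← Finset.prod_pow]
    exact Finset.prod_congr rfl fun i _ => (Finset.prod_pow _ _ _).symm
  rw [mul_pow, mul_pow, e1, e2]
  ring

end GUEAux2

namespace GUEAux3
open GUEAux GUEAux2 Equiv

noncomputable def gg (h : ℕ → Polynomial ℝ) (J : Set ℝ) {m : ℕ}
    (σ τ : Equiv.Perm (Fin (m + 1))) (i : Fin (m + 1)) (t : ℝ) : ℝ :=
  (if i = 0 then J.indicator (fun _ => (1 : ℝ)) t else 1) * (phi h (σ i) t * phi h (τ i) t)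

lemma expand (h : ℕ → Polynomial ℝ) (J : Set ℝ) (m : ℕ) (x : Fin (m + 1) → ℝ) :
    J.indicator (fun _ => (1 : ℝ)) (x 0) * Dd h (m + 1) x ^ 2
      = ∑ σ : Equiv.Perm (Fin (m + 1)), ∑ τ : Equiv.Perm (Fin (m + 1)),
          (((Equiv.Perm.sign σ : ℤ) : ℝ) * ((Equiv.Perm.sign τ : ℤ) : ℝ))
            * ∏ i, gg h J σ τ i (x i) := by
  classical
  have hD : Dd h (m + 1) x = ∑ σ : Equiv.Perm (Fin (m + 1)),
      ((Equiv.Perm.sign σ : ℤ) : ℝ) * ∏ i, phi h (σ i : ℕ) (x i) := by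
    rw [Dd, Matrix.det_apply']
    rfl
  rw [hD, sq, Finset.sum_mul_sum, Finset.mul_sum]
  refine Finset.sum_congr rfl fun σ _ => ?_
  rw [Finset.mul_sum]
  refine Finset.sum_congr rfl fun τ _ => ?_
  have key : ∏ i, gg h J σ τ i (x i)
      = J.indicator (fun _ => (1 : ℝ)) (x 0)
        * ((∏ i, phi h (σ i : ℕ) (x i)) * (∏ i, phi h (τ i : ℕ) (x i))) := by
    unfold gg
    rw [Finset.prod_mul_distrib, Finset.prod_mul_distrib]
    congr 1
    rw [Finset.prod_ite_eq' Finset.univ (0 : Fin (m + 1))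
      (fun i => J.indicator (fun _ => (1 : ℝ)) (x i))]
    simp
  rw [key]
  ring

lemma integrable_gg (h : ℕ → Polynomial ℝ) {J : Set ℝ} (hJ : MeasurableSet J) {m : ℕ}
    (σ τ : Equiv.Perm (Fin (m + 1))) (i : Fin (m + 1)) :
    Integrable (fun t : ℝ => gg h J σ τ i t) := by
  by_cases hi : i = 0
  · have : (fun t : ℝ => gg h J σ τ i t)
        = J.indicator (fun t => phi h (σ i : ℕ) t * phi h (τ i : ℕ) t) := by
      funext t
      by_cases ht : t ∈ J <;> simp [gg, hi, ht]
    rw [this]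
    exact (integrable_phi_mul h _ _).indicator hJ
  · have : (fun t : ℝ => gg h J σ τ i t)
        = fun t => phi h (σ i : ℕ) t * phi h (τ i : ℕ) t := by
      funext t; simp [gg, hi]
    rw [this]
    exact integrable_phi_mul h _ _

lemma integrable_gg_prod (h : ℕ → Polynomial ℝ) {J : Set ℝ} (hJ : MeasurableSet J) {m : ℕ}
    (σ τ : Equiv.Perm (Fin (m + 1))) :
    Integrable (fun x : Fin (m + 1) → ℝ => ∏ i, gg h J σ τ i (x i)) :=
  Integrable.fintype_prod (fun i => integrable_gg h hJ σ τ i)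

lemma integrable_ind_Dd_sq (h : ℕ → Polynomial ℝ) {J : Set ℝ} (hJ : MeasurableSet J) (m : ℕ) :
    Integrable (fun x : Fin (m + 1) → ℝ =>
      J.indicator (fun _ => (1 : ℝ)) (x 0) * Dd h (m + 1) x ^ 2) := by
  simp_rw [expand h J m]
  exact integrable_finset_sum _ fun σ _ => integrable_finset_sum _ fun τ _ =>
    (integrable_gg_prod h hJ σ τ).const_mul _

end GUEAux3

namespace GUEAux4
open GUEAux GUEAux2 GUEAux3 Equiv

lemma perm_eq_of_eq_off_zero {m : ℕ} {σ τ : Equiv.Perm (Fin (m + 1))}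
    (hagree : ∀ i : Fin (m + 1), i ≠ 0 → σ i = τ i) : σ = τ := by
  have h0 : σ 0 = τ 0 := by
    by_contra hne
    have h1 : τ⁻¹ (σ 0) ≠ 0 := by
      intro hc
      apply hne
      have := congrArg τ hc
      simpa using this
    have := hagree _ h1
    rw [show τ (τ⁻¹ (σ 0)) = σ 0 from τ.apply_symm_apply (σ 0)] at this
    have h2 : σ (τ⁻¹ (σ 0)) = σ 0 := this
    have := σ.injective h2
    exact h1 this
  ext i
  by_cases hi : i = 0
  · rw [hi]; exact congrArg Fin.val h0
  · exact congrArg Fin.val (hagree i hi)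

lemma integral_gg (h : ℕ → Polynomial ℝ)
    (horth : ∀ i j, (∫ x : ℝ, (h i).eval x * (h j).eval x * Real.exp (-x ^ 2)) =
      if i = j then 1 else 0)
    {J : Set ℝ} (hJ : MeasurableSet J) {m : ℕ}
    (σ τ : Equiv.Perm (Fin (m + 1))) (i : Fin (m + 1)) :
    (∫ t : ℝ, gg h J σ τ i t)
      = if i = 0 then ∫ t in J, phi h (σ i : ℕ) t * phi h (τ i : ℕ) t
        else (if σ i = τ i then 1 else 0) := by
  by_cases hi : i = 0
  · rw [if_pos hi]
    have : (fun t : ℝ => gg h J σ τ i t)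
        = J.indicator (fun t => phi h (σ i : ℕ) t * phi h (τ i : ℕ) t) := by
      funext t
      by_cases ht : t ∈ J <;> simp [gg, hi, ht]
    rw [this, integral_indicator hJ]
  · rw [if_neg hi]
    have : (fun t : ℝ => gg h J σ τ i t)
        = fun t => phi h (σ i : ℕ) t * phi h (τ i : ℕ) t := by
      funext t; simp [gg, hi]
    rw [this, integral_phi_mul h horth]
    by_cases hst : σ i = τ i
    · rw [if_pos hst, if_pos (by exact_mod_cast congrArg Fin.val hst)]
    · rw [if_neg hst, if_neg (fun hc => hst (Fin.val_injective hc))]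

lemma core (h : ℕ → Polynomial ℝ)
    (horth : ∀ i j, (∫ x : ℝ, (h i).eval x * (h j).eval x * Real.exp (-x ^ 2)) =
      if i = j then 1 else 0)
    (m : ℕ) {J : Set ℝ} (hJ : MeasurableSet J) :
    (∫ x : Fin (m + 1) → ℝ, J.indicator (fun _ => (1 : ℝ)) (x 0) * Dd h (m + 1) x ^ 2)
      = (m.factorial : ℝ) * ∑ j ∈ Finset.range (m + 1), ∫ t in J, phi h j t ^ 2 := by
  classical
  simp_rw [expand h J m]
  rw [integral_finset_sum _ (fun σ _ => integrable_finset_sum _ fun τ _ =>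
    (integrable_gg_prod h hJ σ τ).const_mul _)]
  have step1 : ∀ σ : Equiv.Perm (Fin (m + 1)),
      (∫ x : Fin (m + 1) → ℝ, ∑ τ : Equiv.Perm (Fin (m + 1)),
        (((Equiv.Perm.sign σ : ℤ) : ℝ) * ((Equiv.Perm.sign τ : ℤ) : ℝ))
          * ∏ i, gg h J σ τ i (x i))
      = ∫ t in J, phi h (σ 0 : ℕ) t ^ 2 := by
    intro σ
    rw [integral_finset_sum _ (fun τ _ => (integrable_gg_prod h hJ σ τ).const_mul _)]
    have hval : ∀ τ : Equiv.Perm (Fin (m + 1)),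
        (∫ x : Fin (m + 1) → ℝ,
          (((Equiv.Perm.sign σ : ℤ) : ℝ) * ((Equiv.Perm.sign τ : ℤ) : ℝ))
            * ∏ i, gg h J σ τ i (x i))
        = (((Equiv.Perm.sign σ : ℤ) : ℝ) * ((Equiv.Perm.sign τ : ℤ) : ℝ))
            * ∏ i, ∫ t : ℝ, gg h J σ τ i t := by
      intro τ
      rw [integral_const_mul]
      congr 1
      exact integral_fintype_prod_eq_prod (ι := Fin (m + 1)) (fun i t => gg h J σ τ i t)
    rw [Finset.sum_congr rfl fun τ _ => hval τ]
    rw [Finset.sum_eq_single σ]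
    · have hsq : (((Equiv.Perm.sign σ : ℤ) : ℝ) * ((Equiv.Perm.sign σ : ℤ) : ℝ)) = 1 := by
        rcases Int.units_eq_one_or (Equiv.Perm.sign σ) with hs | hs <;> rw [hs] <;> norm_num
      rw [hsq, one_mul]
      have : ∀ i : Fin (m + 1), (∫ t : ℝ, gg h J σ σ i t)
          = if i = 0 then ∫ t in J, phi h (σ 0 : ℕ) t ^ 2 else 1 := by
        intro i
        rw [integral_gg h horth hJ]
        by_cases hi : i = 0
        · rw [if_pos hi, if_pos hi, hi]
          simp_rw [sq]
        · rw [if_neg hi, if_neg hi, if_pos rfl]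
      rw [Finset.prod_congr rfl fun i _ => this i,
        Finset.prod_ite_eq' Finset.univ (0 : Fin (m + 1))]
      simp
    · intro τ _ hτ
      obtain ⟨i, hi0, hne⟩ : ∃ i : Fin (m + 1), i ≠ 0 ∧ σ i ≠ τ i := by
        by_contra hc
        push_neg at hc
        exact hτ.symm (perm_eq_of_eq_off_zero fun i hi => hc i hi)
      have : (∏ i, ∫ t : ℝ, gg h J σ τ i t) = 0 := by
        refine Finset.prod_eq_zero (Finset.mem_univ i) ?_
        rw [integral_gg h horth hJ, if_neg hi0, if_neg hne]
      rw [this, mul_zero]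
    · intro hc
      exact absurd (Finset.mem_univ σ) hc
  rw [Finset.sum_congr rfl fun σ _ => step1 σ]
  have hcount : (∑ σ : Equiv.Perm (Fin (m + 1)), ∫ t in J, phi h (σ 0 : ℕ) t ^ 2)
      = (m.factorial : ℝ) * ∑ p : Fin (m + 1), ∫ t in J, phi h (p : ℕ) t ^ 2 := by
    rw [← Equiv.sum_comp (Equiv.Perm.decomposeFin (n := m)).symm
      (fun σ => ∫ t in J, phi h (σ 0 : ℕ) t ^ 2)]
    rw [Fintype.sum_prod_type]
    have : ∀ p : Fin (m + 1), ∀ e : Equiv.Perm (Fin m),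
        (∫ t in J, phi h ((Equiv.Perm.decomposeFin.symm (p, e)) 0 : ℕ) t ^ 2)
        = ∫ t in J, phi h (p : ℕ) t ^ 2 := by
      intro p e
      rw [Equiv.Perm.decomposeFin_symm_apply_zero]
    rw [Finset.sum_congr rfl fun p _ => Finset.sum_congr rfl fun e _ => this p e]
    simp [Finset.sum_const, Fintype.card_perm, mul_comm]
    rw [Finset.mul_sum]
  rw [hcount, Fin.sum_univ_eq_sum_range (fun j => ∫ t in J, phi h j t ^ 2)]

end GUEAux4

namespace GUEAux5
open GUEAux GUEAux2 GUEAux3 GUEAux4 Equiv MeasureTheory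

lemma Dd_comp_sq (h : ℕ → Polynomial ℝ) (n : ℕ) (e : Equiv.Perm (Fin n)) (x : Fin n → ℝ) :
    Dd h n (fun j => x (e j)) ^ 2 = Dd h n x ^ 2 := by
  have hmat : Dmat h n (fun j => x (e j)) = (Dmat h n x).submatrix id e := by
    ext i j
    rfl
  rw [Dd, hmat, Matrix.det_permute']
  rcases Int.units_eq_one_or (Equiv.Perm.sign e) with hs | hs <;>
    rw [hs] <;> push_cast <;> rw [← Dd] <;> ring

lemma shift_fun_eq (h : ℕ → Polynomial ℝ) (m : ℕ) (J : Set ℝ) (k : Fin (m + 1)) :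
    (fun x : Fin (m + 1) → ℝ => J.indicator (fun _ => (1 : ℝ)) (x k) * Dd h (m + 1) x ^ 2) ∘
      (MeasurableEquiv.piCongrLeft (fun _ : Fin (m + 1) => ℝ) (Equiv.swap (0 : Fin (m + 1)) k))
      = fun x => J.indicator (fun _ => (1 : ℝ)) (x 0) * Dd h (m + 1) x ^ 2 := by
  funext x
  set e := Equiv.swap (0 : Fin (m + 1)) k with he
  have hT : ∀ i, (MeasurableEquiv.piCongrLeft (fun _ : Fin (m + 1) => ℝ) e) x i
      = x (e.symm i) := by
    intro i
    rw [MeasurableEquiv.coe_piCongrLeft]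
    conv_lhs => rw [show i = e (e.symm i) by simp]
    rw [Equiv.piCongrLeft_apply_apply]
  simp only [Function.comp_apply]
  have h1 : (MeasurableEquiv.piCongrLeft (fun _ : Fin (m + 1) => ℝ) e) x k = x 0 := by
    rw [hT k, he]
    rw [Equiv.symm_swap, Equiv.swap_apply_right]
  have h2 : Dd h (m + 1) ((MeasurableEquiv.piCongrLeft (fun _ : Fin (m + 1) => ℝ) e) x) ^ 2
      = Dd h (m + 1) x ^ 2 := by
    have : ((MeasurableEquiv.piCongrLeft (fun _ : Fin (m + 1) => ℝ) e) x)
        = fun j => x (e.symm j) := funext hT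
    rw [this, Dd_comp_sq]
  rw [h1, h2]

lemma shift_integral (h : ℕ → Polynomial ℝ) (m : ℕ) (J : Set ℝ) (k : Fin (m + 1)) :
    (∫ x : Fin (m + 1) → ℝ, J.indicator (fun _ => (1 : ℝ)) (x k) * Dd h (m + 1) x ^ 2)
      = ∫ x : Fin (m + 1) → ℝ, J.indicator (fun _ => (1 : ℝ)) (x 0) * Dd h (m + 1) x ^ 2 := by
  have hT := volume_measurePreserving_piCongrLeft (fun _ : Fin (m + 1) => ℝ)
    (Equiv.swap (0 : Fin (m + 1)) k)
  rw [← hT.integral_comp']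
  rw [← shift_fun_eq h m J k]
  rfl

lemma shift_integrable (h : ℕ → Polynomial ℝ) {J : Set ℝ} (hJ : MeasurableSet J) (m : ℕ)
    (k : Fin (m + 1)) :
    Integrable (fun x : Fin (m + 1) → ℝ =>
      J.indicator (fun _ => (1 : ℝ)) (x k) * Dd h (m + 1) x ^ 2) := by
  have hT := volume_measurePreserving_piCongrLeft (fun _ : Fin (m + 1) => ℝ)
    (Equiv.swap (0 : Fin (m + 1)) k)
  rw [← hT.integrable_comp_emb (MeasurableEquiv.measurableEmbedding _)]
  rw [shift_fun_eq h m J k]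
  exact integrable_ind_Dd_sq h hJ m

end GUEAux5

theorem gue_expected_count_eq_kernel_integral
    (μ : ∀ n : ℕ, Measure (Fin n → ℝ)) (Z : ℕ → ℝ)
    (hZ : ∀ n, 0 < Z n)
    (hμ : ∀ n, μ n = volume.withDensity (fun x => ENNReal.ofReal (gueDensity n (Z n) x)))
    (hprob : ∀ n, IsProbabilityMeasure (μ n))
    (h : ℕ → Polynomial ℝ)
    (hdeg : ∀ j, (h j).natDegree = j)
    (hlead : ∀ j, 0 < (h j).leadingCoeff)
    (horth : ∀ i j, (∫ x : ℝ, (h i).eval x * (h j).eval x * Real.exp (-x ^ 2)) =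
      if i = j then 1 else 0)
    (n : ℕ) (hn : 1 ≤ n) (I : Set ℝ) (hI : MeasurableSet I) :
    (∫ y, (countIn I y : ℝ) ∂(μ n)) = ∫ x in I, hermiteKernel h n x x := by
  classical
  obtain ⟨m, rfl⟩ : ∃ m, n = m + 1 := ⟨n - 1, (Nat.succ_pred_eq_of_pos hn).symm⟩
  set nn := m + 1 with hnn
  set γ : ℝ := ∏ j : Fin nn, (h (j : ℕ)).leadingCoeff with hγdef
  have hγpos : 0 < γ := Finset.prod_pos fun j _ => hlead _
  set C : ℝ := (Z nn)⁻¹ * (γ ^ 2)⁻¹ with hCdef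
  -- the density equals C * Dd ^ 2
  have hdens : ∀ x : Fin nn → ℝ, gueDensity nn (Z nn) x = C * GUEAux2.Dd h nn x ^ 2 := by
    intro x
    rw [GUEAux2.Dd_sq h hdeg nn x, gueDensity, ← hγdef, hCdef]
    have hgen : ∀ P E : ℝ, (Z nn)⁻¹ * P * E = (Z nn)⁻¹ * (γ ^ 2)⁻¹ * (γ ^ 2 * (P * E)) := by
      intro P E
      have hne : (γ : ℝ) ^ 2 ≠ 0 := pow_ne_zero 2 hγpos.ne'
      field_simp
    exact hgen _ _
  have hdens_nonneg : ∀ x, 0 ≤ gueDensity nn (Z nn) x := by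
    intro x
    rw [hdens x]
    have hC : 0 ≤ C := mul_nonneg (inv_nonneg.mpr (hZ _).le) (inv_nonneg.mpr (sq_nonneg _))
    exact mul_nonneg hC (sq_nonneg _)
  have hmeas : Measurable (gueDensity nn (Z nn)) := by
    unfold gueDensity
    refine Measurable.mul (Measurable.mul measurable_const ?_) ?_
    · exact Finset.measurable_prod _ fun p _ =>
        ((measurable_pi_apply p.1).sub (measurable_pi_apply p.2)).pow_const 2
    · exact (Finset.measurable_sum _ fun i _ =>
        (measurable_pi_apply i).pow_const 2).neg.exp
  -- reduce integrals over μ to weighted Lebesgue integrals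
  have key : ∀ g : (Fin nn → ℝ) → ℝ, (∫ y, g y ∂(μ nn))
      = ∫ y, gueDensity nn (Z nn) y * g y := by
    intro g
    rw [hμ]
    have h1 : (fun x : Fin nn → ℝ => ENNReal.ofReal (gueDensity nn (Z nn) x))
        = fun x => ((Real.toNNReal (gueDensity nn (Z nn) x) : NNReal) : ENNReal) := rfl
    rw [h1, integral_withDensity_eq_integral_smul (hmeas.real_toNNReal) g]
    refine integral_congr_ae (Filter.Eventually.of_forall fun x => ?_)
    beta_reduce
    rw [NNReal.smul_def, Real.coe_toNNReal _ (hdens_nonneg x), smul_eq_mul]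
  -- countIn as a sum of indicators
  have hcount : ∀ y : Fin nn → ℝ, ((countIn I y : ℕ) : ℝ)
      = ∑ i : Fin nn, I.indicator (fun _ => (1 : ℝ)) (y i) := by
    intro y
    rw [countIn, Nat.card_eq_fintype_card, Fintype.card_subtype, Finset.card_filter]
    push_cast
    refine Finset.sum_congr rfl fun i _ => ?_
    by_cases hi : y i ∈ I <;> simp [hi]
  -- the set-integral sums
  set SI : ℝ := ∑ j ∈ Finset.range nn, ∫ t in I, GUEAux.phi h j t ^ 2 with hSIdef
  -- normalization: C * m! * nn = 1
  have hnorm : C * (m.factorial : ℝ) * (nn : ℝ) = 1 := by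
    have h1 : (∫ y, (1 : ℝ) ∂(μ nn)) = 1 := by
      have := hprob nn
      simp
    rw [key (fun _ => (1 : ℝ))] at h1
    have h2 : (∫ y : Fin nn → ℝ, gueDensity nn (Z nn) y * 1)
        = C * ((m.factorial : ℝ) * ∑ j ∈ Finset.range nn,
            ∫ t in (Set.univ : Set ℝ), GUEAux.phi h j t ^ 2) := by
      rw [← GUEAux4.core h horth m MeasurableSet.univ]
      rw [← integral_const_mul]
      refine integral_congr_ae (Filter.Eventually.of_forall fun x => ?_)
      beta_reduce
      rw [hdens x]
      simp [Set.indicator_univ]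
      exact Or.inl rfl
    rw [h2] at h1
    have h3 : (∑ j ∈ Finset.range nn, ∫ t in (Set.univ : Set ℝ), GUEAux.phi h j t ^ 2)
        = (nn : ℝ) := by
      have : ∀ j ∈ Finset.range nn, (∫ t in (Set.univ : Set ℝ), GUEAux.phi h j t ^ 2) = 1 := by
        intro j _
        rw [MeasureTheory.setIntegral_univ]
        have := GUEAux.integral_phi_mul h horth j j
        rw [if_pos rfl] at this
        rw [← this]
        refine integral_congr_ae (Filter.Eventually.of_forall fun t => ?_)
        ring
      rw [Finset.sum_congr rfl this]
      simp
    rw [h3] at h1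
    linarith [h1]
  -- main computation of the LHS
  have hLHS : (∫ y, ((countIn I y : ℕ) : ℝ) ∂(μ nn)) = (nn : ℝ) * (C * ((m.factorial : ℝ) * SI)) := by
    rw [key]
    have hsplit : (∫ y : Fin nn → ℝ, gueDensity nn (Z nn) y * ((countIn I y : ℕ) : ℝ))
        = ∑ i : Fin nn, ∫ y : Fin nn → ℝ,
            C * (I.indicator (fun _ => (1 : ℝ)) (y i) * GUEAux2.Dd h nn y ^ 2) := by
      rw [← integral_finset_sum _ (fun i _ => (GUEAux5.shift_integrable h hI m i).const_mul C)]
      refine integral_congr_ae (Filter.Eventually.of_forall fun y => ?_)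
      beta_reduce
      rw [hdens y, hcount y, Finset.mul_sum]
      refine Finset.sum_congr rfl fun i _ => ?_
      ring
    rw [hsplit]
    have heach : ∀ i : Fin nn, (∫ y : Fin nn → ℝ,
        C * (I.indicator (fun _ => (1 : ℝ)) (y i) * GUEAux2.Dd h nn y ^ 2))
        = C * ((m.factorial : ℝ) * SI) := by
      intro i
      rw [integral_const_mul, GUEAux5.shift_integral h m I i, GUEAux4.core h horth m hI]
    rw [Finset.sum_congr rfl fun i _ => heach i]
    simp [Finset.sum_const]
  rw [hLHS]
  -- RHS
  have hRHS : (∫ x in I, hermiteKernel h nn x x) = SI := by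
    have hptw : ∀ x : ℝ, hermiteKernel h nn x x
        = ∑ j ∈ Finset.range nn, GUEAux.phi h j x ^ 2 := by
      intro x
      rw [hermiteKernel]
      refine Finset.sum_congr rfl fun j _ => ?_
      rw [show GUEAux.phi h j x ^ 2 = GUEAux.phi h j x * GUEAux.phi h j x from sq (GUEAux.phi h j x)]
      rw [GUEAux.phi_mul]
      congr 1
      congr 1
      ring
    rw [setIntegral_congr_ae hI (Filter.Eventually.of_forall fun x _ => hptw x)]
    rw [integral_finset_sum]
    intro j _
    have : Integrable (fun t : ℝ => GUEAux.phi h j t ^ 2) := by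
      have := GUEAux.integrable_phi_mul h j j
      simpa [sq] using this
    exact this.integrableOn
  rw [hRHS]
  -- finish with the normalization identity
  calc (nn : ℝ) * (C * ((m.factorial : ℝ) * SI))
      = (C * (m.factorial : ℝ) * (nn : ℝ)) * SI := by ring
    _ = SI := by rw [hnorm, one_mul]
end

section
/- Let u : ℝ → ℝ be twice differentiable with u''(x) = x·u(x) for all x ∈ ℝ, and suppose that for every polynomial p one has p(x)·u(x) → 0 and p(x)·u'(x) → 0 as x → +∞ (for example u = Ai, the Airy function). Then for every x ∈ ℝ, ∫_x^∞ u(y)² dy = u'(x)² − x·u(x)². -/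
open MeasureTheory Filter

theorem airy_sq_integral
    (u u' : ℝ → ℝ)
    (hu : ∀ x, HasDerivAt u (u' x) x)
    (hu' : ∀ x, HasDerivAt u' (x * u x) x)
    (hdecay : ∀ p : Polynomial ℝ,
      Tendsto (fun x => p.eval x * u x) atTop (nhds 0) ∧
      Tendsto (fun x => p.eval x * u' x) atTop (nhds 0))
    (x : ℝ) :
    (∫ y in Set.Ioi x, (u y) ^ 2) = (u' x) ^ 2 - x * (u x) ^ 2 := by
  set g : ℝ → ℝ := fun y => y * u y ^ 2 - u' y ^ 2 with hg
  have hderiv : ∀ y ∈ Set.Ici x, HasDerivAt g (u y ^ 2) y := by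
    intro y _
    have h1 : HasDerivAt (fun y => y * u y ^ 2)
        (1 * u y ^ 2 + y * ((2 : ℕ) * u y ^ 1 * u' y)) y :=
      (hasDerivAt_id y).mul ((hu y).pow 2)
    have h2 : HasDerivAt (fun y => u' y ^ 2)
        ((2 : ℕ) * u' y ^ 1 * (y * u y)) y := (hu' y).pow 2
    have := h1.sub h2
    rw [show u y ^ 2 = 1 * u y ^ 2 + y * ((2 : ℕ) * u y ^ 1 * u' y) - (2 : ℕ) * u' y ^ 1 * (y * u y) by push_cast; ring]
    exact this
  have hu0 : Tendsto u atTop (nhds 0) := by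
    have := (hdecay 1).1
    simpa using this
  have hu'0 : Tendsto u' atTop (nhds 0) := by
    have := (hdecay 1).2
    simpa using this
  have hxu0 : Tendsto (fun y => y * u y) atTop (nhds 0) := by
    have := (hdecay Polynomial.X).1
    simpa using this
  have hlim : Tendsto g atTop (nhds 0) := by
    have : Tendsto (fun y => (y * u y) * u y - u' y * u' y) atTop (nhds (0 * 0 - 0 * 0)) :=
      (hxu0.mul hu0).sub (hu'0.mul hu'0)
    simpa [hg] using this.congr (fun y => by ring)
  have key := integral_Ioi_of_hasDerivAt_of_nonneg' hderiv
    (fun y _ => sq_nonneg (u y)) hlim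
  rw [key, hg]
  ring
end

section
/- Let u : ℝ → ℝ be twice differentiable with u''(x) = x·u(x) for all x ∈ ℝ, and suppose that for every polynomial p one has p(x)·u(x) → 0 and p(x)·u'(x) → 0 as x → +∞ (for example u = Ai, the Airy function). Then for every x ∈ ℝ, ∫_x^∞ y·u(y)² dy = (1/3)·( x·u'(x)² − x²·u(x)² − u(x)·u'(x) ). -/
open MeasureTheory Filter

theorem airy_y_sq_integral
    (u u' : ℝ → ℝ)
    (hu : ∀ x, HasDerivAt u (u' x) x)
    (hu' : ∀ x, HasDerivAt u' (x * u x) x)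
    (hdecay : ∀ p : Polynomial ℝ,
      Tendsto (fun x => p.eval x * u x) atTop (nhds 0) ∧
      Tendsto (fun x => p.eval x * u' x) atTop (nhds 0))
    (x : ℝ) :
    (∫ y in Set.Ioi x, y * (u y) ^ 2) = (1/3) * (x * (u' x) ^ 2 - x ^ 2 * (u x) ^ 2 - u x * u' x) := by
  set F : ℝ → ℝ := fun y => -(1/3) * (y * (u' y) ^ 2 - y ^ 2 * (u y) ^ 2 - u y * u' y) with hF
  have hderiv : ∀ y : ℝ, HasDerivAt F (y * (u y) ^ 2) y := by
    intro y
    have h1 := (hasDerivAt_id y).mul ((hu' y).pow 2)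
    have h2 := (hasDerivAt_pow 2 y).mul ((hu y).pow 2)
    have h3 := (hu y).mul (hu' y)
    have := (((h1.sub h2).sub h3).const_mul (-(1/3) : ℝ))
    convert this using 1
    · rfl
    · rfl
    · rfl
    · simp; ring
  -- u, u', y*u, y^2*u, y^3*u all tend to 0
  have h0 : Tendsto u atTop (nhds 0) := by
    have := (hdecay 1).1; simpa using this
  have h0' : Tendsto u' atTop (nhds 0) := by
    have := (hdecay 1).2; simpa using this
  have h1' : Tendsto (fun y => y * u' y) atTop (nhds 0) := by
    have := (hdecay Polynomial.X).2; simpa using this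
  have h2u : Tendsto (fun y => y ^ 2 * u y) atTop (nhds 0) := by
    have := (hdecay (Polynomial.X ^ 2)).1; simpa using this
  have h3u : Tendsto (fun y => y ^ 3 * u y) atTop (nhds 0) := by
    have := (hdecay (Polynomial.X ^ 3)).1; simpa using this
  have hFlim : Tendsto F atTop (nhds 0) := by
    have : Tendsto (fun y => -(1/3) * ((y * u' y) * u' y - (y ^ 2 * u y) * u y - u y * u' y))
        atTop (nhds (-(1/3) * ((0 : ℝ) * 0 - 0 * 0 - 0 * 0))) :=
      (((h1'.mul h0').sub (h2u.mul h0)).sub (h0.mul h0')).const_mul _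
    simp only [mul_zero, zero_mul, sub_zero, zero_sub, neg_zero] at this
    refine this.congr (fun y => ?_)
    simp [hF]; ring
  -- integrability
  have hcont : Continuous (fun y : ℝ => y * (u y) ^ 2) := by
    have hcu : Continuous u := continuous_iff_continuousAt.mpr (fun s => (hu s).continuousAt)
    exact continuous_id.mul (hcu.pow 2)
  have hint : IntegrableOn (fun y : ℝ => y * (u y) ^ 2) (Set.Ioi x) := by
    obtain ⟨M, hM⟩ : ∃ M : ℝ, ∀ y ≥ M, |y ^ 3 * u y| ≤ 1 ∧ |u y| ≤ 1 := by
      have hA := (NormedAddCommGroup.tendsto_nhds_zero.mp h3u) 1 one_pos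
      have hB := (NormedAddCommGroup.tendsto_nhds_zero.mp h0) 1 one_pos
      rcases (hA.and hB).exists_forall_of_atTop with ⟨M, hM⟩
      exact ⟨M, fun y hy => ⟨(hM y hy).1.le, (hM y hy).2.le⟩⟩
    set N := max M (max x 1) with hN
    have hN1 : (1 : ℝ) ≤ N := le_max_of_le_right (le_max_right _ _)
    have hNx : x ≤ N := le_max_of_le_right (le_max_left _ _)
    have hNM : M ≤ N := le_max_left _ _
    have hint2 : IntegrableOn (fun y : ℝ => y * (u y) ^ 2) (Set.Ioi N) := by
      have hdom : IntegrableOn (fun y : ℝ => y ^ (-2 : ℝ)) (Set.Ioi N) :=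
        integrableOn_Ioi_rpow_of_lt (by norm_num) (lt_of_lt_of_le one_pos hN1)
      refine Integrable.mono' hdom (hcont.aestronglyMeasurable.restrict) ?_
      filter_upwards [ae_restrict_mem measurableSet_Ioi] with y hy
      have hy1 : (1 : ℝ) < y := lt_of_le_of_lt hN1 hy
      have hy0 : (0 : ℝ) < y := lt_trans one_pos hy1
      have h := hM y (le_of_lt (lt_of_le_of_lt hNM hy))
      have key : y * (u y) ^ 2 = (y ^ 3 * u y) * u y / y ^ 2 := by
        field_simp
      have habs : |y * (u y) ^ 2| = |y ^ 3 * u y| * |u y| / y ^ 2 := by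
        rw [key, abs_div, abs_mul, abs_of_pos (pow_pos hy0 2)]
      rw [Real.norm_eq_abs, habs, Real.rpow_neg hy0.le, Real.rpow_two]
      calc |y ^ 3 * u y| * |u y| / y ^ 2 ≤ 1 * 1 / y ^ 2 := by
            gcongr
            exacts [h.1, h.2]
        _ = (y ^ 2)⁻¹ := by ring
    have hint1 : IntegrableOn (fun y : ℝ => y * (u y) ^ 2) (Set.Ioc x N) :=
      hcont.integrableOn_Ioc
    have : Set.Ioi x = Set.Ioc x N ∪ Set.Ioi N := (Set.Ioc_union_Ioi_eq_Ioi hNx).symm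
    rw [this]
    exact hint1.union hint2
  have := integral_Ioi_of_hasDerivAt_of_tendsto'
    (f := F) (f' := fun y => y * (u y) ^ 2) (a := x)
    (fun y _ => hderiv y) hint hFlim
  rw [this]
  simp only [hF]
  ring
end

section
/- Let u : ℝ → ℝ be twice differentiable with u''(x) = x·u(x) for all x ∈ ℝ, and suppose that for every polynomial p one has p(x)·u(x) → 0 and p(x)·u'(x) → 0 as x → +∞ (for example u = Ai, the Airy function). Then for every x ∈ ℝ, ∫_x^∞ u'(y)² dy = (1/3)·( x²·u(x)² − x·u'(x)² − 2·u(x)·u'(x) ). -/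
open MeasureTheory Filter

theorem airy_deriv_sq_integral
    (u u' : ℝ → ℝ)
    (hu : ∀ x, HasDerivAt u (u' x) x)
    (hu' : ∀ x, HasDerivAt u' (x * u x) x)
    (hdecay : ∀ p : Polynomial ℝ,
      Tendsto (fun x => p.eval x * u x) atTop (nhds 0) ∧
      Tendsto (fun x => p.eval x * u' x) atTop (nhds 0))
    (x : ℝ) :
    (∫ y in Set.Ioi x, (u' y) ^ 2) = (1/3) * (x ^ 2 * (u x) ^ 2 - x * (u' x) ^ 2 - 2 * u x * u' x) := by
  set g : ℝ → ℝ := fun y => -(1/3) * (y ^ 2 * (u y) ^ 2 - y * (u' y) ^ 2 - 2 * u y * u' y)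
    with hgdef
  have hg : ∀ y : ℝ, HasDerivAt g ((u' y) ^ 2) y := by
    intro y
    have A : HasDerivAt (fun y : ℝ => y ^ 2 * (u y) ^ 2)
        ((2 * y ^ 1) * (u y) ^ 2 + y ^ 2 * (2 * u y ^ 1 * u' y)) y :=
      (hasDerivAt_pow 2 y).mul ((hu y).pow 2)
    have B : HasDerivAt (fun y : ℝ => y * (u' y) ^ 2)
        (1 * (u' y) ^ 2 + y * (2 * u' y ^ 1 * (y * u y))) y :=
      (hasDerivAt_id y).mul ((hu' y).pow 2)
    have C : HasDerivAt (fun y : ℝ => 2 * u y * u' y)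
        (2 * (u' y * u' y + u y * (y * u y))) y := by
      have h := ((hu y).mul (hu' y)).const_mul (2 : ℝ)
      have e : (fun y => 2 * u y * u' y) = fun y => 2 * (u y * u' y) := by
        funext z; ring
      rw [e]; exact h
    have := ((A.sub B).sub C).const_mul (-(1/3) : ℝ)
    refine HasDerivAt.congr_deriv this ?_
    ring
  have hu0 : Tendsto u atTop (nhds 0) := by
    simpa using (hdecay 1).1
  have hu'0 : Tendsto u' atTop (nhds 0) := by
    simpa using (hdecay 1).2
  have hxu' : Tendsto (fun y => y * u' y) atTop (nhds 0) := by
    simpa using (hdecay Polynomial.X).2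
  have hx2u : Tendsto (fun y => y ^ 2 * u y) atTop (nhds 0) := by
    refine ((hdecay (Polynomial.X ^ 2)).1).congr fun y => ?_
    simp
  have huu' : Tendsto (fun y => u y * u' y) atTop (nhds 0) := by
    simpa using hu0.mul hu'0
  have t1 : Tendsto (fun y => y ^ 2 * (u y) ^ 2) atTop (nhds 0) := by
    have h := hx2u.mul hu0
    rw [mul_zero] at h
    exact h.congr fun y => by ring
  have t2 : Tendsto (fun y => y * (u' y) ^ 2) atTop (nhds 0) := by
    have h := hxu'.mul hu'0
    rw [mul_zero] at h
    exact h.congr fun y => by ring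
  have t3 : Tendsto (fun y => 2 * u y * u' y) atTop (nhds 0) := by
    have h := huu'.const_mul (2 : ℝ)
    rw [mul_zero] at h
    exact h.congr fun y => by ring
  have hgt : Tendsto g atTop (nhds 0) := by
    have h := ((t1.sub t2).sub t3).const_mul (-(1/3) : ℝ)
    simpa [hgdef] using h
  have hcont : ContinuousOn g (Set.Ici x) :=
    (Continuous.continuousOn (by
      have : Differentiable ℝ g := fun y => (hg y).differentiableAt
      exact this.continuous))
  have key := integral_Ioi_of_hasDerivAt_of_nonneg (hcont.continuousWithinAt (Set.self_mem_Ici))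
      (fun y _ => hg y) (fun y _ => sq_nonneg (u' y)) hgt
  rw [key, hgdef]
  ring
end

section
/- Let u : ℝ → ℝ be twice differentiable with u''(x) = x·u(x) for all x ∈ ℝ, and suppose that for every polynomial p one has p(x)·u(x) → 0 and p(x)·u'(x) → 0 as x → +∞ (for example u = Ai, the Airy function). Then for every x ∈ ℝ, ∫_x^∞ y²·u(y)² dy = (1/5)·( x²·u'(x)² − x³·u(x)² − 2x·u(x)·u'(x) + u(x)² ). -/
open MeasureTheory Filter

theorem airy_ysq_sq_integral
    (u u' : ℝ → ℝ)
    (hu : ∀ x, HasDerivAt u (u' x) x)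
    (hu' : ∀ x, HasDerivAt u' (x * u x) x)
    (hdecay : ∀ p : Polynomial ℝ,
      Tendsto (fun x => p.eval x * u x) atTop (nhds 0) ∧
      Tendsto (fun x => p.eval x * u' x) atTop (nhds 0))
    (x : ℝ) :
    (∫ y in Set.Ioi x, y ^ 2 * (u y) ^ 2) = (1/5) * (x ^ 2 * (u' x) ^ 2 - x ^ 3 * (u x) ^ 2 - 2 * x * u x * u' x + (u x) ^ 2) := by
  set g : ℝ → ℝ := fun y =>
    -((1/5) * (y ^ 2 * (u' y) ^ 2 - y ^ 3 * (u y) ^ 2 - 2 * y * u y * u' y + (u y) ^ 2)) with hg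
  have hderiv : ∀ y : ℝ, HasDerivAt g (y ^ 2 * (u y) ^ 2) y := by
    intro y
    have hU := hu y
    have hU' := hu' y
    have d1 : HasDerivAt (fun y => y ^ 2 * (u' y) ^ 2)
        ((2 * y ^ 1) * (u' y) ^ 2 + y ^ 2 * (2 * u' y ^ 1 * (y * u y))) y :=
      (hasDerivAt_pow 2 y).mul (hU'.pow 2)
    have d2 : HasDerivAt (fun y => y ^ 3 * (u y) ^ 2)
        ((3 * y ^ 2) * (u y) ^ 2 + y ^ 3 * (2 * u y ^ 1 * u' y)) y :=
      (hasDerivAt_pow 3 y).mul (hU.pow 2)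
    have d3a : HasDerivAt (fun y : ℝ => 2 * y) (2 : ℝ) y := by
      simpa using (hasDerivAt_id y).const_mul (2:ℝ)
    have d3 : HasDerivAt (fun y => 2 * y * u y * u' y)
        (((2 * u y + 2 * y * u' y) * u' y) + (2 * y * u y) * (y * u y)) y :=
      ((d3a.mul hU).mul hU')
    have d4 : HasDerivAt (fun y => (u y) ^ 2) (2 * u y ^ 1 * u' y) y := hU.pow 2
    have h1 := (((d1.sub d2).sub d3).add d4).const_mul (1/5 : ℝ)
    have := h1.neg
    refine this.congr_deriv ?_
    ring
  have hlim : Tendsto g atTop (nhds 0) := by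
    have h0 : ∀ n : ℕ, Tendsto (fun y => y ^ n * u y) atTop (nhds 0) ∧
        Tendsto (fun y => y ^ n * u' y) atTop (nhds 0) := by
      intro n
      have := hdecay (Polynomial.X ^ n)
      simpa using this
    have hu0 : Tendsto u atTop (nhds 0) := by simpa using (h0 0).1
    have hu'0 : Tendsto u' atTop (nhds 0) := by simpa using (h0 0).2
    have t1 : Tendsto (fun y => y ^ 2 * (u' y) ^ 2) atTop (nhds 0) := by
      have := ((h0 2).2.mul hu'0)
      simpa [mul_assoc, pow_two] using this
    have t2 : Tendsto (fun y => y ^ 3 * (u y) ^ 2) atTop (nhds 0) := by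
      have := ((h0 3).1.mul hu0)
      simpa [mul_assoc, pow_two] using this
    have t3 : Tendsto (fun y => 2 * y * u y * u' y) atTop (nhds 0) := by
      have := ((h0 1).1.mul hu'0).const_mul (2:ℝ)
      simpa [mul_assoc] using this
    have t4 : Tendsto (fun y => (u y) ^ 2) atTop (nhds 0) := by
      have := hu0.mul hu0
      simpa [pow_two] using this
    have : Tendsto (fun y => -((1/5 : ℝ) * (y ^ 2 * (u' y) ^ 2 - y ^ 3 * (u y) ^ 2 -
        2 * y * u y * u' y + (u y) ^ 2))) atTop (nhds (-((1/5:ℝ) * (0 - 0 - 0 + 0)))) :=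
      (((t1.sub t2).sub t3).add t4).const_mul (1/5) |>.neg
    rw [hg]
    simpa using this
  have key := integral_Ioi_of_hasDerivAt_of_nonneg'
    (g := g) (g' := fun y => y ^ 2 * (u y) ^ 2) (a := x)
    (fun y _ => hderiv y)
    (fun y _ => by positivity) hlim
  rw [key, hg]
  ring
end

section
/- Let u : ℝ → ℝ be twice differentiable with u''(x) = x·u(x) for all x ∈ ℝ, and suppose that for every polynomial p one has p(x)·u(x) → 0 and p(x)·u'(x) → 0 as x → +∞ (for example u = Ai, the Airy function). Then for every x ∈ ℝ, ∫_x^∞ y·u'(y)² dy = (1/5)·( x³·u(x)² − x²·u'(x)² − 3x·u(x)·u'(x) + (3/2)·u(x)² ). -/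
open MeasureTheory Filter Set

theorem airy_y_deriv_sq_integral
    (u u' : ℝ → ℝ)
    (hu : ∀ x, HasDerivAt u (u' x) x)
    (hu' : ∀ x, HasDerivAt u' (x * u x) x)
    (hdecay : ∀ p : Polynomial ℝ,
      Tendsto (fun x => p.eval x * u x) atTop (nhds 0) ∧
      Tendsto (fun x => p.eval x * u' x) atTop (nhds 0))
    (x : ℝ) :
    (∫ y in Set.Ioi x, y * (u' y) ^ 2) = (1/5) * (x ^ 3 * (u x) ^ 2 - x ^ 2 * (u' x) ^ 2 - 3 * x * u x * u' x + (3/2) * (u x) ^ 2) := by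
  set F : ℝ → ℝ := fun y => -(1/5) * (y ^ 3 * (u y) ^ 2 - y ^ 2 * (u' y) ^ 2 - 3 * y * u y * u' y + (3/2) * (u y) ^ 2) with hFdef
  have hF : ∀ y : ℝ, HasDerivAt F (y * (u' y) ^ 2) y := by
    intro y
    have h1 : HasDerivAt (fun y : ℝ => y ^ 3 * (u y) ^ 2)
        (3 * y ^ 2 * (u y) ^ 2 + y ^ 3 * (2 * u y ^ 1 * u' y)) y := by
      exact ((hasDerivAt_pow 3 y).mul ((hu y).pow 2)).congr_deriv (by simp)
    have h2 : HasDerivAt (fun y : ℝ => y ^ 2 * (u' y) ^ 2)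
        (2 * y * (u' y) ^ 2 + y ^ 2 * (2 * u' y ^ 1 * (y * u y))) y := by
      exact ((hasDerivAt_pow 2 y).mul ((hu' y).pow 2)).congr_deriv (by simp)
    have h3 : HasDerivAt (fun y : ℝ => 3 * y * u y * u' y)
        ((3 * u y + 3 * y * u' y) * u' y + 3 * y * u y * (y * u y)) y := by
      have h3a : HasDerivAt (fun y : ℝ => 3 * y * u y) (3 * u y + 3 * y * u' y) y := by
        have := (((hasDerivAt_id y).const_mul (3:ℝ)).mul (hu y))
        exact this.congr_deriv (by simp only [id_eq]; ring)
      exact h3a.mul (hu' y)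
    have h4 : HasDerivAt (fun y : ℝ => (3/2 : ℝ) * (u y) ^ 2)
        ((3/2 : ℝ) * (2 * u y ^ 1 * u' y)) y := by
      simpa using ((hu y).pow 2).const_mul (3/2 : ℝ)
    have h := (((h1.sub h2).sub h3).add h4).const_mul (-(1/5) : ℝ)
    have heq : F = fun y : ℝ =>
        -(1/5) * (y ^ 3 * (u y) ^ 2 - y ^ 2 * (u' y) ^ 2 - 3 * y * u y * u' y + (3/2) * (u y) ^ 2) := rfl
    rw [heq]
    exact h.congr_deriv (by ring)
  have hu0 : Tendsto u atTop (nhds 0) := by simpa using (hdecay 1).1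
  have hu'0 : Tendsto u' atTop (nhds 0) := by simpa using (hdecay 1).2
  have hX3u : Tendsto (fun y => y ^ 3 * u y) atTop (nhds 0) := by
    have h := (hdecay (Polynomial.X ^ 3)).1
    simp only [Polynomial.eval_pow, Polynomial.eval_X] at h
    exact h
  have hX2u' : Tendsto (fun y => y ^ 2 * u' y) atTop (nhds 0) := by
    have h := (hdecay (Polynomial.X ^ 2)).2
    simp only [Polynomial.eval_pow, Polynomial.eval_X] at h
    exact h
  have hXu : Tendsto (fun y => y * u y) atTop (nhds 0) := by
    simpa using (hdecay Polynomial.X).1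
  have hXu' : Tendsto (fun y => y * u' y) atTop (nhds 0) := by
    simpa using (hdecay Polynomial.X).2
  have hFlim : Tendsto F atTop (nhds 0) := by
    have t1 : Tendsto (fun y => y ^ 3 * (u y) ^ 2) atTop (nhds 0) := by
      have := hX3u.mul hu0
      simp only [mul_zero] at this
      exact this.congr fun y => by ring
    have t2 : Tendsto (fun y => y ^ 2 * (u' y) ^ 2) atTop (nhds 0) := by
      have := hX2u'.mul hu'0
      simp only [mul_zero] at this
      exact this.congr fun y => by ring
    have t3 : Tendsto (fun y => 3 * y * u y * u' y) atTop (nhds 0) := by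
      have := (hXu.mul hu'0).const_mul (3:ℝ)
      simp only [mul_zero] at this
      exact this.congr fun y => by ring
    have t4 : Tendsto (fun y => (3/2 : ℝ) * (u y) ^ 2) atTop (nhds 0) := by
      have := (hu0.mul hu0).const_mul (3/2 : ℝ)
      simp only [mul_zero] at this
      exact this.congr fun y => by ring
    have := (((t1.sub t2).sub t3).add t4).const_mul (-(1/5) : ℝ)
    simp only [sub_zero, add_zero, mul_zero] at this
    exact this.congr fun y => by rw [hFdef]
  have hcu' : Continuous u' := continuous_iff_continuousAt.2 fun y => (hu' y).continuousAt
  have hcont : Continuous (fun y : ℝ => y * (u' y) ^ 2) := by fun_prop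
  -- eventual bound
  have tb : Tendsto (fun y => y ^ 3 * (u' y) ^ 2) atTop (nhds 0) := by
    have := hX2u'.mul hXu'
    simp only [mul_zero] at this
    exact this.congr fun y => by ring
  have hev : ∀ᶠ y in atTop, |y ^ 3 * (u' y) ^ 2| ≤ 1 := by
    have := tb.abs
    simp only [abs_zero] at this
    exact this.eventually_le_const (by norm_num)
  obtain ⟨M, hM⟩ := eventually_atTop.1 hev
  set N : ℝ := max (max x M) 1 with hN
  have hN1 : (1:ℝ) ≤ N := le_max_right _ _
  have hN0 : (0:ℝ) < N := lt_of_lt_of_le one_pos hN1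
  have hint : IntegrableOn (fun y : ℝ => y * (u' y) ^ 2) (Ioi x) := by
    have h1 : IntegrableOn (fun y : ℝ => y * (u' y) ^ 2) (Ioc x N) :=
      hcont.integrableOn_Ioc
    have h2 : IntegrableOn (fun y : ℝ => y * (u' y) ^ 2) (Ioi N) := by
      have hrint : IntegrableOn (fun t : ℝ => t ^ (-2 : ℝ)) (Ioi N) :=
        integrableOn_Ioi_rpow_of_lt (by norm_num) hN0
      refine hrint.integrable.mono' (hcont.aestronglyMeasurable.restrict) ?_
      filter_upwards [ae_restrict_mem measurableSet_Ioi] with y hy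
      have hyN : N < y := hy
      have hy1 : (1:ℝ) ≤ y := le_of_lt (lt_of_le_of_lt hN1 hyN)
      have hy0 : (0:ℝ) < y := lt_of_lt_of_le one_pos hy1
      have hyM : M ≤ y := le_trans (le_trans (le_max_right x M) (le_max_left _ 1)) (le_of_lt hyN)
      have hb := hM y hyM
      have hy2 : (0:ℝ) < y ^ 2 := by positivity
      rw [Real.norm_eq_abs, Real.rpow_neg hy0.le, Real.rpow_two, inv_eq_one_div,
        le_div_iff₀ hy2]
      have habs : |y * (u' y) ^ 2| * y ^ 2 = |y ^ 3 * (u' y) ^ 2| := by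
        rw [← abs_of_nonneg hy2.le, ← abs_mul]
        congr 1
        ring
      linarith [habs ▸ hb]
    refine ((h1.union h2).mono_set ?_)
    intro y hy
    rcases le_or_gt y N with h | h
    · exact Or.inl ⟨hy, h⟩
    · exact Or.inr h
  rw [integral_Ioi_of_hasDerivAt_of_tendsto' (fun y _ => hF y) hint hFlim]
  rw [hFdef]
  ring
end

section
/- Let t ∈ (−1,1) be fixed and define F(x) = ∫_x^1 √(1 − y²) dy for x ∈ [−1,1]. For n ≥ 2 let Γ_n = [ t, t + (1−t)/log n ] × [ t − (1+t)/log n, t − 1/n ] ⊂ ℝ². Then the oscillatory double integral ∬_{Γ_n} cos[ 4n·(F(x) − F(y)) ] / (x − y)² dx dy is bounded as n → ∞; that is, there exist C > 0 and N such that for all n ≥ N, | ∫_{t}^{t+(1−t)/log n} ∫_{t−(1+t)/log n}^{t−1/n} cos[4n(F(x) − F(y))]/(x−y)² dy dx | ≤ C. -/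
open MeasureTheory Filter

/-- `F(x) = ∫_x^1 √(1-y²) dy`. -/
noncomputable def semicircleTail (x : ℝ) : ℝ := ∫ y in x..1, Real.sqrt (1 - y ^ 2)

lemma cont_sc : Continuous (fun y : ℝ => Real.sqrt (1 - y ^ 2)) := by
  continuity

lemma semicircleTail_hasDerivAt (z : ℝ) :
    HasDerivAt semicircleTail (-Real.sqrt (1 - z ^ 2)) z :=
  intervalIntegral.integral_hasDerivAt_left
    (cont_sc.intervalIntegrable z 1)
    (cont_sc.stronglyMeasurableAtFilter _ _)
    cont_sc.continuousAt

lemma semicircleTail_continuous : Continuous semicircleTail :=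
  continuous_iff_continuousAt.2 fun z => (semicircleTail_hasDerivAt z).continuousAt

lemma integral_inv_sq (x a b : ℝ) (hab : a ≤ b) (hbx : b < x) :
    ∫ y in a..b, ((x - y)^2)⁻¹ = (x - b)⁻¹ - (x - a)⁻¹ := by
  have key : ∀ y ∈ Set.uIcc a b, HasDerivAt (fun y => (x - y)⁻¹) (((x - y)^2)⁻¹) y := by
    intro y hy
    rw [Set.uIcc_of_le hab] at hy
    have hxy : x - y ≠ 0 := by
      have : y ≤ b := hy.2
      nlinarith [hy.2]
    have h := (((hasDerivAt_id y).const_sub x)).inv hxy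
    refine h.congr_deriv ?_
    simp only [id]
    field_simp
  have hint : IntervalIntegrable (fun y => ((x - y)^2)⁻¹) volume a b := by
    apply ContinuousOn.intervalIntegrable
    apply ContinuousOn.inv₀
    · fun_prop
    · intro y hy
      rw [Set.uIcc_of_le hab] at hy
      have : x - y ≠ 0 := by nlinarith [hy.2]
      positivity
  exact intervalIntegral.integral_eq_sub_of_hasDerivAt key hint

lemma alg_bound (L σ s w E vv y : ℝ) (hL : 0 < L) (hσ : 0 < σ) (hσ1 : σ ≤ 1)
    (hss : σ ≤ s) (hw : 0 < w) (hwE : w⁻¹ ≤ E) (hy1 : |y| ≤ 1) (hvv : |vv| ≤ 1) :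
    |-(L * (-(y / s) * w ^ 2 - 2 * s * w)) / (L * (s * w ^ 2)) ^ 2 * vv|
      ≤ (σ ^ 2 * σ)⁻¹ * (1 + 2 * E) / L * (w ^ 2)⁻¹ := by
  have hs : 0 < s := lt_of_lt_of_le hσ hss
  have hE : 0 < E := lt_of_lt_of_le (by positivity) hwE
  have hnum : |(-(y / s) * w ^ 2 - 2 * s * w)| ≤ w ^ 2 / s + 2 * s * w := by
    refine (abs_sub _ _).trans ?_
    rw [abs_mul, abs_neg, abs_div, abs_mul, abs_mul]
    rw [abs_of_nonneg (sq_nonneg w), abs_of_pos hs, abs_of_pos hw,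
      abs_of_nonneg (by norm_num : (0:ℝ) ≤ 2)]
    have h7 : |y| / s * w ^ 2 ≤ 1 / s * w ^ 2 := by gcongr
    have h8 : 1 / s * w ^ 2 = w ^ 2 / s := by ring
    linarith
  have hden : (L * (s * w ^ 2)) ^ 2 = L ^ 2 * (s ^ 2 * w ^ 4) := by ring
  calc |-(L * (-(y / s) * w ^ 2 - 2 * s * w)) / (L * (s * w ^ 2)) ^ 2 * vv|
      = L * |(-(y / s) * w ^ 2 - 2 * s * w)| / (L * (s * w ^ 2)) ^ 2 * |vv| := by
        rw [abs_mul, abs_div, abs_neg, abs_mul, abs_of_pos hL,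
          abs_of_nonneg (sq_nonneg (L * (s * w ^ 2)))]
    _ ≤ L * (w ^ 2 / s + 2 * s * w) / (L ^ 2 * (s ^ 2 * w ^ 4)) * 1 := by
        rw [hden]
        gcongr
    _ = (s ^ 2 * s)⁻¹ / L * (w ^ 2)⁻¹ + 2 / s * w⁻¹ / L * (w ^ 2)⁻¹ := by
        field_simp
    _ ≤ (σ ^ 2 * σ)⁻¹ / L * (w ^ 2)⁻¹ + 2 / σ * E / L * (w ^ 2)⁻¹ := by
        gcongr <;> positivity
    _ ≤ (σ ^ 2 * σ)⁻¹ / L * (w ^ 2)⁻¹ + 2 * (σ ^ 2 * σ)⁻¹ * E / L * (w ^ 2)⁻¹ := by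
        have h9 : 2 / σ ≤ 2 * (σ ^ 2 * σ)⁻¹ := by
          rw [div_eq_mul_inv]
          gcongr 2 * ?_
          exact inv_anti₀ (by positivity) (by nlinarith)
        gcongr (σ ^ 2 * σ)⁻¹ / L * (w ^ 2)⁻¹ + ?_ * E / L * (w ^ 2)⁻¹

    _ = (σ ^ 2 * σ)⁻¹ * (1 + 2 * E) / L * (w ^ 2)⁻¹ := by ring

set_option maxHeartbeats 1000000 in
lemma inner_bound (x a b c L : ℝ) (hab : a ≤ b) (hbx : b < x) (hc : 0 < c) (hc1 : c ≤ 1)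
    (hL : 0 < L) (hy : ∀ y ∈ Set.Icc a b, c ≤ 1 - y ^ 2) :
    |∫ y in a..b, Real.cos (L * (semicircleTail x - semicircleTail y)) / (x - y) ^ 2|
      ≤ ((c * Real.sqrt c)⁻¹ / L) * ((x - b)⁻¹ + 4 * ((x - b)⁻¹) ^ 2) := by
  set F := semicircleTail with hF
  set M₀ := (c * Real.sqrt c)⁻¹ with hM₀
  set E := (x - b)⁻¹ with hE
  have hsc : 0 < Real.sqrt c := Real.sqrt_pos.2 hc
  have hM₀pos : 0 < M₀ := by positivity
  have hxb : 0 < x - b := by linarith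
  have hEpos : 0 < E := by positivity
  -- facts about y in Icc
  have hyfacts : ∀ y ∈ Set.Icc a b, 0 < Real.sqrt (1 - y ^ 2) ∧ 0 < x - y ∧ |y| ≤ 1 := by
    intro y hyy
    refine ⟨Real.sqrt_pos.2 (lt_of_lt_of_le hc (hy y hyy)), by linarith [hyy.2], ?_⟩
    have := hy y hyy
    rw [abs_le]; constructor <;> nlinarith
  -- auxiliary functions
  set D : ℝ → ℝ := fun y => Real.sqrt (1 - y ^ 2) * (x - y) ^ 2 with hD
  set D' : ℝ → ℝ := fun y => -(y / Real.sqrt (1 - y ^ 2)) * (x - y) ^ 2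
      - 2 * Real.sqrt (1 - y ^ 2) * (x - y) with hD'
  set u : ℝ → ℝ := fun y => (L * D y)⁻¹ with hu
  set u' : ℝ → ℝ := fun y => -(L * D' y) / (L * D y) ^ 2 with hu'
  set v : ℝ → ℝ := fun y => Real.sin (L * (F x - F y)) with hv
  set v' : ℝ → ℝ := fun y => Real.cos (L * (F x - F y)) * (L * Real.sqrt (1 - y ^ 2)) with hv'
  have hDpos : ∀ y ∈ Set.Icc a b, 0 < D y := by
    intro y hyy
    obtain ⟨h1, h2, _⟩ := hyfacts y hyy
    positivity
  -- derivative of D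
  have hDderiv : ∀ y ∈ Set.Icc a b, HasDerivAt D (D' y) y := by
    intro y hyy
    obtain ⟨h1, h2, _⟩ := hyfacts y hyy
    have hne : (1 : ℝ) - y ^ 2 ≠ 0 := by nlinarith [hy y hyy]
    have hg : HasDerivAt (fun y : ℝ => 1 - y ^ 2) (-(2 * y)) y := by
      have := (hasDerivAt_pow 2 y).const_sub 1
      exact this.congr_deriv (by ring)
    have hsq : HasDerivAt (fun y : ℝ => Real.sqrt (1 - y ^ 2))
        (1 / (2 * Real.sqrt (1 - y ^ 2)) * (-(2 * y))) y :=
      (Real.hasDerivAt_sqrt hne).comp y hg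
    have hquad : HasDerivAt (fun y : ℝ => (x - y) ^ 2) (2 * (x - y) * (-1)) y := by
      have := ((hasDerivAt_id y).const_sub x).pow 2
      simp only [id] at this
      exact this.congr_deriv (by ring)
    have := hsq.mul hquad
    refine this.congr_deriv ?_
    rw [hD']
    field_simp
    ring
  have huderiv : ∀ y ∈ Set.Icc a b, HasDerivAt u (u' y) y := by
    intro y hyy
    have hne : L * D y ≠ 0 := by
      have := hDpos y hyy; positivity
    exact ((hDderiv y hyy).const_mul L).inv hne
  have hvderiv : ∀ y : ℝ, HasDerivAt v (v' y) y := by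
    intro y
    have hinner : HasDerivAt (fun y => L * (F x - F y)) (L * Real.sqrt (1 - y ^ 2)) y := by
      have := ((semicircleTail_hasDerivAt y).const_sub (F x)).const_mul L
      exact this.congr_deriv (by ring)
    exact hinner.sin
  -- integrability
  have hD'cont : ContinuousOn D' (Set.Icc a b) := by
    apply ContinuousOn.sub
    · apply ContinuousOn.mul
      · apply ContinuousOn.neg
        apply ContinuousOn.div (by fun_prop) (by fun_prop)
        intro y hyy
        exact (hyfacts y hyy).1.ne'
      · fun_prop
    · fun_prop
  have hu'cont : ContinuousOn u' (Set.Icc a b) := by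
    apply ContinuousOn.div
    · exact (hD'cont.const_smul L).neg.congr (fun y _ => by simp [hu', smul_eq_mul])
    · fun_prop
    · intro y hyy
      have := hDpos y hyy
      positivity
  have huIcc : Set.uIcc a b = Set.Icc a b := Set.uIcc_of_le hab
  have hu'int : IntervalIntegrable u' volume a b := by
    apply ContinuousOn.intervalIntegrable; rwa [huIcc]
  have hphase : Continuous fun y : ℝ => L * (F x - F y) :=
    continuous_const.mul (continuous_const.sub semicircleTail_continuous)
  have hv'int : IntervalIntegrable v' volume a b :=
    ((Real.continuous_cos.comp hphase).mul
      ((continuous_const.mul (by fun_prop : Continuous fun y : ℝ => Real.sqrt (1 - y ^ 2))))).intervalIntegrable a b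
  -- rewrite integrand as u * v'
  have habs_sin : ∀ z : ℝ, |Real.sin z| ≤ 1 := fun z =>
    abs_le.2 ⟨Real.neg_one_le_sin z, Real.sin_le_one z⟩
  have hix : (∫ y in a..b, Real.cos (L * (F x - F y)) / (x - y) ^ 2)
      = ∫ y in a..b, u y * v' y := by
    apply intervalIntegral.integral_congr
    intro y hyy
    rw [huIcc] at hyy
    obtain ⟨h1, h2, _⟩ := hyfacts y hyy
    simp only [hu, hv', hD]
    have hne1 : Real.sqrt (1 - y ^ 2) ≠ 0 := h1.ne'
    have hne2 : x - y ≠ 0 := h2.ne'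
    field_simp
  have hibp : (∫ y in a..b, u y * v' y)
      = u b * v b - u a * v a - ∫ y in a..b, u' y * v y :=
    intervalIntegral.integral_mul_deriv_eq_deriv_mul
      (fun y hyy => huderiv y (huIcc ▸ hyy)) (fun y _ => hvderiv y) hu'int hv'int
  -- bound on boundary terms
  have hsqrtge : ∀ y ∈ Set.Icc a b, Real.sqrt c ≤ Real.sqrt (1 - y ^ 2) :=
    fun y hyy => Real.sqrt_le_sqrt (hy y hyy)
  have hcsc : c * Real.sqrt c ≤ Real.sqrt c := by nlinarith [hsc]
  have hinvsc : (Real.sqrt c)⁻¹ ≤ M₀ := by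
    rw [hM₀]
    exact inv_anti₀ (by positivity) hcsc
  have hbdry : ∀ y ∈ Set.Icc a b, |u y * v y| ≤ M₀ / L * E ^ 2 := by
    intro y hyy
    obtain ⟨h1, h2, _⟩ := hyfacts y hyy
    have hupos : 0 < u y := by
      have := hDpos y hyy
      simp only [hu]; positivity
    have hxyb : x - b ≤ x - y := by linarith [hyy.2]
    have hkey : L * (c * Real.sqrt c * (x - b) ^ 2) ≤ L * D y := by
      have h3 : c * Real.sqrt c * (x - b) ^ 2 ≤ Real.sqrt (1 - y ^ 2) * (x - y) ^ 2 := by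
        have := hsqrtge y hyy
        have h4 : (x - b) ^ 2 ≤ (x - y) ^ 2 := by nlinarith
        nlinarith [Real.sqrt_nonneg (1 - y^2)]
      exact mul_le_mul_of_nonneg_left h3 hL.le
    calc |u y * v y| = u y * |v y| := by rw [abs_mul, abs_of_pos hupos]
      _ ≤ u y * 1 := by gcongr; exact habs_sin _
      _ = (L * D y)⁻¹ := by rw [mul_one]
      _ ≤ (L * (c * Real.sqrt c * (x - b) ^ 2))⁻¹ :=
          inv_anti₀ (by positivity) hkey
      _ = M₀ / L * E ^ 2 := by
          rw [hM₀, hE]; field_simp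
  -- pointwise bound on u' * v
  have hptwise : ∀ y ∈ Set.Icc a b, |u' y * v y| ≤ M₀ * (1 + 2 * E) / L * ((x - y) ^ 2)⁻¹ := by
    intro y hyy
    obtain ⟨h1, h2, hy1⟩ := hyfacts y hyy
    have hwE : (x - y)⁻¹ ≤ E := by
      rw [hE]; exact inv_anti₀ hxb (by linarith only [hyy.2])
    have hkey := alg_bound L (Real.sqrt c) (Real.sqrt (1 - y ^ 2)) (x - y) E (v y) y hL hsc
      (Real.sqrt_le_one.mpr hc1) (hsqrtge y hyy) h2 hwE hy1 (habs_sin _)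
    have hM : M₀ = (Real.sqrt c ^ 2 * Real.sqrt c)⁻¹ := by
      rw [hM₀, Real.sq_sqrt hc.le]
    have huv : u' y * v y = -(L * (-(y / Real.sqrt (1 - y ^ 2)) * (x - y) ^ 2 -
        2 * Real.sqrt (1 - y ^ 2) * (x - y))) /
        (L * (Real.sqrt (1 - y ^ 2) * (x - y) ^ 2)) ^ 2 * v y := rfl
    rw [huv, hM]
    exact hkey
  -- bound the integral of u' * v
  have hgint : IntervalIntegrable (fun y => M₀ * (1 + 2 * E) / L * ((x - y) ^ 2)⁻¹) volume a b := by
    apply ContinuousOn.intervalIntegrable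
    rw [huIcc]
    apply ContinuousOn.mul continuousOn_const
    apply ContinuousOn.inv₀ (by fun_prop)
    intro y hyy
    have := (hyfacts y hyy).2.1
    positivity
  have hgval : (∫ y in a..b, M₀ * (1 + 2 * E) / L * ((x - y) ^ 2)⁻¹)
      = M₀ * (1 + 2 * E) / L * ((x - b)⁻¹ - (x - a)⁻¹) := by
    rw [intervalIntegral.integral_const_mul, integral_inv_sq x a b hab hbx]
  have hEa : (x - a)⁻¹ ≤ E := by
    rw [hE]
    exact inv_anti₀ hxb (by linarith only [hab])
  have hEapos : 0 ≤ (x - a)⁻¹ := by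
    have h11 : 0 < x - a := by linarith only [hab, hbx]
    positivity
  have hintuv : |∫ y in a..b, u' y * v y| ≤ M₀ * (1 + 2 * E) / L * E := by
    have hco : 0 ≤ M₀ * (1 + 2 * E) / L :=
      div_nonneg (mul_nonneg hM₀pos.le (by linarith only [hEpos])) hL.le
    have haeb : ∀ᵐ z ∂(volume.restrict (Set.uIoc a b)),
        ‖u' z * v z‖ ≤ M₀ * (1 + 2 * E) / L * ((x - z) ^ 2)⁻¹ := by
      rw [ae_restrict_iff' measurableSet_uIoc]
      refine Filter.Eventually.of_forall fun z hz => ?_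
      have hmem : z ∈ Set.Icc a b := by
        rw [Set.uIoc_of_le hab] at hz
        exact ⟨hz.1.le, hz.2⟩
      rw [Real.norm_eq_abs]
      exact hptwise z hmem
    have h := intervalIntegral.norm_integral_le_abs_of_norm_le haeb hgint
    rw [Real.norm_eq_abs] at h
    refine h.trans ?_
    rw [hgval, ← hE]
    rw [abs_of_nonneg (mul_nonneg hco (by linarith only [hEa, hEapos]))]
    have h10 := mul_le_mul_of_nonneg_left (sub_le_self E hEapos) hco
    linarith only [h10]
  -- put everything together
  rw [hix, hibp]
  have h1 := hbdry b ⟨hab, le_refl b⟩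
  have h2 := hbdry a ⟨le_refl a, hab⟩
  have t1 : |u b * v b - u a * v a - ∫ y in a..b, u' y * v y|
      ≤ |u b * v b - u a * v a| + |∫ y in a..b, u' y * v y| := abs_sub _ _
  have t2 : |u b * v b - u a * v a| ≤ |u b * v b| + |u a * v a| := abs_sub _ _
  have t3 : M₀ / L * E ^ 2 + M₀ / L * E ^ 2 + M₀ * (1 + 2 * E) / L * E
      = M₀ / L * (E + 4 * E ^ 2) := by ring
  linarith only [t1, t2, t3, h1, h2, hintuv]

lemma integral_inv_shift (t δ h : ℝ) (hh : 0 < h) (hδ : 0 ≤ δ) :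
    ∫ x in t..(t + δ), (x - t + h)⁻¹ = Real.log (δ + h) - Real.log h := by
  have hpos : ∀ x ∈ Set.uIcc t (t + δ), 0 < x - t + h := by
    intro x hx
    rw [Set.uIcc_of_le (by linarith)] at hx
    have := hx.1
    linarith
  have key : ∀ x ∈ Set.uIcc t (t + δ),
      HasDerivAt (fun x => Real.log (x - t + h)) ((x - t + h)⁻¹) x := by
    intro x hx
    have hne : x - t + h ≠ 0 := (hpos x hx).ne'
    have hlin : HasDerivAt (fun x : ℝ => x - t + h) 1 x := by
      simpa using ((hasDerivAt_id x).sub_const t).add_const h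
    have := (Real.hasDerivAt_log hne).comp x hlin
    exact this.congr_deriv (by simp)
  have hint : IntervalIntegrable (fun x => (x - t + h)⁻¹) volume t (t + δ) := by
    apply ContinuousOn.intervalIntegrable
    exact ContinuousOn.inv₀ (by fun_prop) (fun x hx => (hpos x hx).ne')
  rw [intervalIntegral.integral_eq_sub_of_hasDerivAt key hint]
  rw [show t + δ - t + h = δ + h by ring, show t - t + h = h by ring]

lemma integral_inv_sq_shift (t δ h : ℝ) (hh : 0 < h) (hδ : 0 ≤ δ) :
    ∫ x in t..(t + δ), ((x - t + h) ^ 2)⁻¹ = h⁻¹ - (δ + h)⁻¹ := by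
  have hpos : ∀ x ∈ Set.uIcc t (t + δ), 0 < x - t + h := by
    intro x hx
    rw [Set.uIcc_of_le (by linarith)] at hx
    have := hx.1
    linarith
  have key : ∀ x ∈ Set.uIcc t (t + δ),
      HasDerivAt (fun x => -(x - t + h)⁻¹) (((x - t + h) ^ 2)⁻¹) x := by
    intro x hx
    have hne : x - t + h ≠ 0 := (hpos x hx).ne'
    have hlin : HasDerivAt (fun x : ℝ => x - t + h) 1 x := by
      simpa using ((hasDerivAt_id x).sub_const t).add_const h
    have := (hlin.inv hne).neg
    refine this.congr_deriv ?_
    field_simp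
  have hint : IntervalIntegrable (fun x => ((x - t + h) ^ 2)⁻¹) volume t (t + δ) := by
    apply ContinuousOn.intervalIntegrable
    refine ContinuousOn.inv₀ (by fun_prop) (fun x hx => ?_)
    have := hpos x hx
    positivity
  rw [intervalIntegral.integral_eq_sub_of_hasDerivAt key hint]
  rw [show t + δ - t + h = δ + h by ring, show t - t + h = h by ring]
  ring

set_option maxHeartbeats 1000000 in
theorem oscillatory_integral_bounded (t : ℝ) (ht : t ∈ Set.Ioo (-1:ℝ) 1) :
    ∃ C > (0:ℝ), ∃ N : ℕ, ∀ n : ℕ, N ≤ n →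
      |∫ x in t..(t + (1 - t) / Real.log n),
          ∫ y in (t - (1 + t) / Real.log n)..(t - 1 / n),
            Real.cos (4 * n * (semicircleTail x - semicircleTail y)) / (x - y) ^ 2| ≤ C := by
  obtain ⟨ht1, ht2⟩ := ht
  set s := max ((1 - t) / 2) ((1 + t) / 2) with hs
  have hs0 : 0 < s := lt_of_lt_of_le (by linarith) (le_max_right _ _)
  have hs1 : s < 1 := max_lt (by linarith) (by linarith)
  set c := 1 - s ^ 2 with hc
  have hcpos : 0 < c := by nlinarith
  have hc1 : c ≤ 1 := by nlinarith
  set M₀ := (c * Real.sqrt c)⁻¹ with hM₀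
  have hscpos : 0 < Real.sqrt c := Real.sqrt_pos.2 hcpos
  have hM₀pos : 0 < M₀ := by positivity
  refine ⟨2 * M₀, by positivity, ?_⟩
  have hev1 : ∀ᶠ n : ℕ in atTop, 2 ≤ Real.log n :=
    (Real.tendsto_log_atTop.comp tendsto_natCast_atTop_atTop).eventually_ge_atTop 2
  have hev2 : ∀ᶠ n : ℕ in atTop, (2 / (1 + t)) ^ 2 ≤ (n:ℝ) :=
    tendsto_natCast_atTop_atTop.eventually_ge_atTop _
  have hev3 : ∀ᶠ n : ℕ in atTop, 1 ≤ n := eventually_ge_atTop 1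
  suffices h : ∀ᶠ n : ℕ in atTop,
      |∫ x in t..(t + (1 - t) / Real.log n),
          ∫ y in (t - (1 + t) / Real.log n)..(t - 1 / n),
            Real.cos (4 * n * (semicircleTail x - semicircleTail y)) / (x - y) ^ 2|
        ≤ 2 * M₀ by
    exact eventually_atTop.mp h
  filter_upwards [hev1, hev2, hev3] with n hlog2 hsqn hn1
  have hn0 : (0:ℝ) < n := by exact_mod_cast hn1
  have hlogpos : (0:ℝ) < Real.log n := by linarith
  set δ := (1 - t) / Real.log (n:ℝ) with hδdef
  set A := t - (1 + t) / Real.log (n:ℝ) with hA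
  set B := t - 1 / (n:ℝ) with hB
  set L := 4 * (n:ℝ) with hL
  have hδpos : 0 < δ := div_pos (by linarith) hlogpos
  have hδ1 : δ ≤ 1 := by
    rw [hδdef, div_le_one hlogpos]; linarith
  have hLpos : 0 < L := by rw [hL]; linarith
  -- log n ≤ (1+t) n
  have hlogn_le : Real.log n ≤ (1 + t) * n := by
    have h1 : Real.log n = 2 * Real.log (Real.sqrt n) := by
      rw [Real.log_sqrt hn0.le]; ring
    have h2 : Real.log (Real.sqrt n) ≤ Real.sqrt n - 1 :=
      Real.log_le_sub_one_of_pos (Real.sqrt_pos.2 hn0)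
    have h3 : 2 / (1 + t) ≤ Real.sqrt n := by
      have h5 := Real.sqrt_le_sqrt hsqn
      rwa [Real.sqrt_sq (le_of_lt (div_pos two_pos (by linarith)))] at h5
    have h3' : 2 ≤ Real.sqrt n * (1 + t) := (div_le_iff₀ (by linarith)).mp h3
    have h4 : Real.sqrt n * Real.sqrt n = n := Real.mul_self_sqrt hn0.le
    nlinarith [Real.sqrt_nonneg (n:ℝ)]
  have hAB : A ≤ B := by
    rw [hA, hB]
    have h6 : 1 / (n:ℝ) ≤ (1 + t) / Real.log n := by
      rw [div_le_div_iff₀ hn0 hlogpos]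
      linarith
    linarith
  have hBt : B < t := by
    rw [hB]
    have : 0 < 1 / (n:ℝ) := by positivity
    linarith
  have hyc : ∀ y ∈ Set.Icc A B, c ≤ 1 - y ^ 2 := by
    intro y hy
    have h5 : (1 + t) / Real.log n ≤ (1 + t) / 2 := by
      gcongr
      linarith
    have hsl : (1 - t) / 2 ≤ s := le_max_left _ _
    have hsr : (1 + t) / 2 ≤ s := le_max_right _ _
    have hyl : -s ≤ y := by
      have := hy.1
      rw [hA] at this
      linarith
    have hyr : y ≤ s := by
      have := hy.2
      rw [hB] at this
      have h7 : 0 < 1 / (n:ℝ) := by positivity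
      linarith
    have h8 : y ^ 2 ≤ s ^ 2 := sq_le_sq' hyl hyr
    rw [hc]; linarith
  -- inner bound
  have hinner : ∀ x ∈ Set.Icc t (t + δ),
      |∫ y in A..B, Real.cos (L * (semicircleTail x - semicircleTail y)) / (x - y) ^ 2|
        ≤ M₀ / L * ((x - t + 1 / n)⁻¹ + 4 * ((x - t + 1 / n) ^ 2)⁻¹) := by
    intro x hx
    have hBx : B < x := lt_of_lt_of_le hBt hx.1
    have h := inner_bound x A B c L hAB hBx hcpos hc1 hLpos hyc
    rw [show x - B = x - t + 1 / (n:ℝ) by rw [hB]; ring] at h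
    rw [inv_pow] at h
    exact h
  -- outer bound
  have hxpos : ∀ x ∈ Set.uIcc t (t + δ), 0 < x - t + 1 / (n:ℝ) := by
    intro x hx
    rw [Set.uIcc_of_le (by linarith)] at hx
    have h7 : 0 < 1 / (n:ℝ) := by positivity
    have := hx.1
    linarith
  have hint1 : IntervalIntegrable (fun x => (x - t + 1 / (n:ℝ))⁻¹) volume t (t + δ) := by
    apply ContinuousOn.intervalIntegrable
    exact ContinuousOn.inv₀ (by fun_prop) (fun x hx => (hxpos x hx).ne')
  have hint2 : IntervalIntegrable (fun x => ((x - t + 1 / (n:ℝ)) ^ 2)⁻¹) volume t (t + δ) := by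
    apply ContinuousOn.intervalIntegrable
    refine ContinuousOn.inv₀ (by fun_prop) (fun x hx => ?_)
    have := hxpos x hx
    positivity
  have hΦint : IntervalIntegrable
      (fun x => M₀ / L * ((x - t + 1 / (n:ℝ))⁻¹ + 4 * ((x - t + 1 / (n:ℝ)) ^ 2)⁻¹))
      volume t (t + δ) := (hint1.add (hint2.const_mul 4)).const_mul (M₀ / L)
  have haeΦ : ∀ᵐ x ∂(volume.restrict (Set.uIoc t (t + δ))),
      ‖∫ y in A..B, Real.cos (L * (semicircleTail x - semicircleTail y)) / (x - y) ^ 2‖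
        ≤ M₀ / L * ((x - t + 1 / (n:ℝ))⁻¹ + 4 * ((x - t + 1 / (n:ℝ)) ^ 2)⁻¹) := by
    rw [ae_restrict_iff' measurableSet_uIoc]
    refine Filter.Eventually.of_forall fun x hx => ?_
    have hmem : x ∈ Set.Icc t (t + δ) := by
      rw [Set.uIoc_of_le (by linarith)] at hx
      exact ⟨hx.1.le, hx.2⟩
    rw [Real.norm_eq_abs]
    exact hinner x hmem
  have houter := intervalIntegral.norm_integral_le_abs_of_norm_le haeΦ hΦint
  rw [Real.norm_eq_abs] at houter
  refine houter.trans ?_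
  -- compute the Φ integral
  have hΦval : (∫ x in t..(t + δ),
        M₀ / L * ((x - t + 1 / (n:ℝ))⁻¹ + 4 * ((x - t + 1 / (n:ℝ)) ^ 2)⁻¹))
      = M₀ / L * ((Real.log (δ + 1 / n) - Real.log (1 / n))
          + 4 * ((1 / (n:ℝ))⁻¹ - (δ + 1 / n)⁻¹)) := by
    rw [intervalIntegral.integral_const_mul,
      intervalIntegral.integral_add hint1 (hint2.const_mul 4),
      intervalIntegral.integral_const_mul,
      integral_inv_shift t δ (1 / n) (by positivity) hδpos.le,
      integral_inv_sq_shift t δ (1 / n) (by positivity) hδpos.le]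
  rw [hΦval]
  have hn_ne : (n:ℝ) ≠ 0 := hn0.ne'
  have hlogterm : Real.log (δ + 1 / n) - Real.log (1 / n) ≤ n * δ := by
    rw [← Real.log_div (by positivity) (by positivity)]
    rw [show (δ + 1 / n) / (1 / (n:ℝ)) = n * δ + 1 by field_simp]
    have := Real.log_le_sub_one_of_pos (show (0:ℝ) < n * δ + 1 by positivity)
    linarith
  have hlogterm0 : 0 ≤ Real.log (δ + 1 / n) - Real.log (1 / n) := by
    have := Real.log_le_log (by positivity : (0:ℝ) < 1 / n)
      (by linarith : 1 / (n:ℝ) ≤ δ + 1 / n)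
    linarith
  have hsqterm : (1 / (n:ℝ))⁻¹ - (δ + 1 / n)⁻¹ ≤ n := by
    have h9 : 0 < (δ + 1 / (n:ℝ))⁻¹ := by positivity
    have h10 : (1 / (n:ℝ))⁻¹ = n := by rw [one_div, inv_inv]
    linarith
  have hsqterm0 : 0 ≤ (1 / (n:ℝ))⁻¹ - (δ + 1 / n)⁻¹ := by
    have h9 : (δ + 1 / (n:ℝ))⁻¹ ≤ (1 / (n:ℝ))⁻¹ := by
      apply inv_anti₀ (by positivity)
      linarith
    linarith
  have hX5 : (Real.log (δ + 1 / n) - Real.log (1 / n))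
      + 4 * ((1 / (n:ℝ))⁻¹ - (δ + 1 / n)⁻¹) ≤ 5 * n := by
    have h10 : (n:ℝ) * δ ≤ n := by nlinarith
    linarith
  have hX0 : 0 ≤ (Real.log (δ + 1 / n) - Real.log (1 / n))
      + 4 * ((1 / (n:ℝ))⁻¹ - (δ + 1 / n)⁻¹) := by linarith
  rw [abs_of_nonneg (mul_nonneg (by positivity) hX0)]
  have h11 : M₀ / L * ((Real.log (δ + 1 / n) - Real.log (1 / n))
      + 4 * ((1 / (n:ℝ))⁻¹ - (δ + 1 / n)⁻¹)) ≤ M₀ / L * (5 * n) :=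
    mul_le_mul_of_nonneg_left hX5 (by positivity)
  have h12 : M₀ / L * (5 * n) = 5 / 4 * M₀ := by
    rw [hL]; field_simp
  linarith only [h11, h12, hM₀pos]
end
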